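/- Let Z = X_α × ℝ^{n+1} with its block decomposition as above, and let c : [0,1] → ∂Z be a path such that c(0) has infinite itinerary. Then either c(t) has the same itinerary as c(0) for all t ∈ [0,1], or there is some t ∈ [0,1] such that c(t) has finite itinerary. -/

import Mathlib

open Set Metric Filter Topology

noncomputable section

universe u v

/-- A geodesic segment from `x` to `y`, parametrized by arc length on `[0, dist x y]`
and extended constantly afterwards (so that `γ t` makes sense for all `t ≥ 0`). -/
def IsGeodesicSegment {X : Type*} [MetricSpace X] (γ : ℝ → X) (x y : X) : Prop :=
  γ 0 = x ∧
    (∀ s ∈ Set.Icc (0 : ℝ) (dist x y), ∀ t ∈ Set.Icc (0 : ℝ) (dist x y),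
      dist (γ s) (γ t) = |s - t|) ∧
    ∀ t : ℝ, dist x y ≤ t → γ t = y

/-- A geodesic ray based at `x0`, parametrized by arc length on `[0, ∞)`. -/
def IsGeodesicRay {X : Type*} [MetricSpace X] (x0 : X) (γ : ℝ → X) : Prop :=
  γ 0 = x0 ∧ ∀ s ∈ Set.Ici (0 : ℝ), ∀ t ∈ Set.Ici (0 : ℝ), dist (γ s) (γ t) = |s - t|

/-- A metric space is CAT(0) if it is geodesic and satisfies the CN-inequality of
Bruhat–Tits (for complete geodesic spaces this is equivalent to the comparison-triangle
definition of CAT(0)). -/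
def IsCAT0 (X : Type*) [MetricSpace X] : Prop :=
  (∀ x y : X, ∃ γ : ℝ → X, IsGeodesicSegment γ x y) ∧
    ∀ p q r m : X, dist q m = dist q r / 2 → dist r m = dist q r / 2 →
      dist p m ^ 2 + dist q r ^ 2 / 4 ≤ (dist p q ^ 2 + dist p r ^ 2) / 2

/-- The visual boundary of `X` based at `x0`: the set of geodesic rays from `x0`. -/
def VisualBoundary (X : Type*) [MetricSpace X] (x0 : X) : Type _ :=
  {γ : ℝ → X // IsGeodesicRay x0 γ}

/-- The cone topology on the visual boundary, generated by the basic sets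
`U(c, r, D) = {c' | dist (c r) (c' r) < D}`. -/
instance VisualBoundary.instTopologicalSpace (X : Type*) [MetricSpace X] (x0 : X) :
    TopologicalSpace (VisualBoundary X x0) :=
  TopologicalSpace.generateFrom
    {U | ∃ (c : VisualBoundary X x0) (r D : ℝ), 0 < r ∧ 0 < D ∧
      U = {c' : VisualBoundary X x0 | dist (c.1 r) (c'.1 r) < D}}

/-- The limit set of a subset `A ⊆ X` in the visual boundary: boundary points that are
limits (in the cone topology of `X ∪ ∂X`) of sequences of points of `A`. -/
def limitSet {X : Type*} [MetricSpace X] (x0 : X) (A : Set X) :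
    Set (VisualBoundary X x0) :=
  {ξ | ∃ a : ℕ → X, (∀ n, a n ∈ A) ∧
    Tendsto (fun n => dist x0 (a n)) atTop atTop ∧
    ∃ σ : ℕ → ℝ → X, (∀ n, IsGeodesicSegment (σ n) x0 (a n)) ∧
      ∀ r : ℝ, 0 ≤ r → Tendsto (fun n => dist (σ n r) (ξ.1 r)) atTop (nhds 0)}

/-- The subset of the visual boundary consisting of rays staying in `A`; for a closed
convex subset `A` containing the basepoint this realizes the visual boundary of `A`
inside `∂X`. -/
def subBoundary {X : Type*} [MetricSpace X] (x0 : X) (A : Set X) :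
    Set (VisualBoundary X x0) :=
  {ξ | ∀ t : ℝ, 0 ≤ t → ξ.1 t ∈ A}

/-- An action of `G` on `X` by isometries (given by a homomorphism to the isometry
group) is geometric if it is properly discontinuous and cocompact. -/
def IsGeometricAction {G : Type*} {X : Type*} [Group G] [MetricSpace X]
    (ρ : G →* (X ≃ᵢ X)) : Prop :=
  (∀ K L : Set X, IsCompact K → IsCompact L →
    {g : G | ((ρ g) '' K ∩ L).Nonempty}.Finite) ∧
  ∃ K : Set X, IsCompact K ∧ ⋃ g : G, (ρ g) '' K = Set.univ

/-- A geometric action on an invariant subspace `S ⊆ X`. -/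
def IsGeometricActionOn {G X : Type*} [Group G] [MetricSpace X]
    (ρ : G →* (X ≃ᵢ X)) (S : Set X) : Prop :=
  (∀ g : G, (ρ g) '' S = S) ∧
  (∀ K L : Set X, K ⊆ S → L ⊆ S → IsCompact K → IsCompact L →
    {g : G | ((ρ g) '' K ∩ L).Nonempty}.Finite) ∧
  ∃ K : Set X, K ⊆ S ∧ IsCompact K ∧ ⋃ g : G, (ρ g) '' K = S

/-- A subset `B` of a metric space is geodesically convex if every geodesic segment
between points of `B` stays in `B`. -/
def IsGeodesicallyConvex {X : Type*} [MetricSpace X] (B : Set X) : Prop :=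
  ∀ x ∈ B, ∀ y ∈ B, ∀ γ : ℝ → X, IsGeodesicSegment γ x y →
    ∀ t ∈ Set.Icc (0 : ℝ) (dist x y), γ t ∈ B

/-- A block decomposition of the subspace `S` of a CAT(0) space `X` (take `S = univ`
for a decomposition of the whole space): a family of closed convex blocks covering `S`,
each meeting at least two others, with a parity assignment so that intersecting blocks
have opposite parity, and an `ε > 0` such that two blocks intersect iff their
`ε`-neighborhoods intersect. -/
structure BlockDecomposition (X : Type*) [MetricSpace X] (S : Set X) where
  blocks : Set (Set X)
  nonempty_blocks : ∀ B ∈ blocks, B.Nonempty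
  closed : ∀ B ∈ blocks, IsClosed B
  convex : ∀ B ∈ blocks, IsGeodesicallyConvex B
  covers : ⋃₀ blocks = S
  meets_two : ∀ B ∈ blocks, ∃ B₁ ∈ blocks, ∃ B₂ ∈ blocks,
    B₁ ≠ B₂ ∧ B₁ ≠ B ∧ B₂ ≠ B ∧ (B ∩ B₁).Nonempty ∧ (B ∩ B₂).Nonempty
  parity : Set X → Bool
  parity_cond : ∀ B ∈ blocks, ∀ B' ∈ blocks, B ≠ B' → (B ∩ B').Nonempty →
    parity B ≠ parity B'
  eps : ℝ
  eps_pos : 0 < eps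
  eps_cond : ∀ B ∈ blocks, ∀ B' ∈ blocks, B ≠ B' →
    ((B ∩ B').Nonempty ↔ (Metric.thickening eps B ∩ Metric.thickening eps B').Nonempty)

/-- A wall: a nontrivial intersection of two distinct blocks. -/
def IsWall {X : Type*} [MetricSpace X] {S : Set X} (𝓑 : BlockDecomposition X S)
    (W : Set X) : Prop :=
  ∃ B ∈ 𝓑.blocks, ∃ B' ∈ 𝓑.blocks, B ≠ B' ∧ W = B ∩ B' ∧ W.Nonempty

/-- The nerve of a block decomposition: a vertex for each block, an edge whenever two
blocks intersect nontrivially. -/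
def nerve {X : Type*} [MetricSpace X] {S : Set X} (𝓑 : BlockDecomposition X S) :
    SimpleGraph 𝓑.blocks where
  Adj B B' := B ≠ B' ∧ ((B : Set X) ∩ (B' : Set X)).Nonempty
  symm := by
    constructor
    intro B B' h
    exact ⟨fun e => h.1 e.symm, by rw [Set.inter_comm]; exact h.2⟩
  loopless := by constructor; intro B h; exact h.1 rfl

/-- The union of the block boundaries in `∂X`. -/
def blockBoundaries {X : Type*} [MetricSpace X] {S : Set X} (x0 : X)
    (𝓑 : BlockDecomposition X S) : Set (VisualBoundary X x0) :=
  ⋃ B ∈ 𝓑.blocks, limitSet x0 B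

/-- A ray `γ` enters the block `B` at time `t` if at time `t` it lies in `B` and in no
other block. -/
def entersAt {X : Type*} [MetricSpace X] {S : Set X} (𝓑 : BlockDecomposition X S)
    (γ : ℝ → X) (B : Set X) (t : ℝ) : Prop :=
  0 ≤ t ∧ B ∈ 𝓑.blocks ∧ γ t ∈ B ∧ ∀ B' ∈ 𝓑.blocks, B' ≠ B → γ t ∉ B'

/-- The set of blocks entered by a ray: the underlying set of its itinerary. -/
def enteredBlocks {X : Type*} [MetricSpace X] {S : Set X} (𝓑 : BlockDecomposition X S)
    (γ : ℝ → X) : Set (Set X) :=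
  {B | ∃ t : ℝ, entersAt 𝓑 γ B t}

/-- A ray has infinite itinerary if it enters infinitely many blocks. -/
def HasInfiniteItinerary {X : Type*} [MetricSpace X] {S : Set X}
    (𝓑 : BlockDecomposition X S) (γ : ℝ → X) : Prop :=
  (enteredBlocks 𝓑 γ).Infinite

/-- Two rays have the same itinerary: they enter the same blocks, in the same order. -/
def SameItinerary {X : Type*} [MetricSpace X] {S : Set X} (𝓑 : BlockDecomposition X S)
    (γ γ' : ℝ → X) : Prop :=
  enteredBlocks 𝓑 γ = enteredBlocks 𝓑 γ' ∧
  ∀ B B' : Set X, ∀ t s : ℝ, entersAt 𝓑 γ B t → entersAt 𝓑 γ B' s → t ≤ s →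
    ∃ t' s' : ℝ, entersAt 𝓑 γ' B t' ∧ entersAt 𝓑 γ' B' s' ∧ t' ≤ s'

/-- `G` is the amalgamated free product `A ∗_C B` along the injections `ιA, ιB`,
witnessed by `jA : A →* G`, `jB : B →* G`, via the universal property of the pushout. -/
def IsAmalgamatedProduct {A B C G : Type u} [Group A] [Group B] [Group C] [Group G]
    (ιA : C →* A) (ιB : C →* B) (jA : A →* G) (jB : B →* G) : Prop :=
  Function.Injective ιA ∧ Function.Injective ιB ∧
  jA.comp ιA = jB.comp ιB ∧
  ∀ (H : Type u) [Group H], ∀ (fA : A →* H) (fB : B →* H),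
    fA.comp ιA = fB.comp ιB → ∃! f : G →* H, f.comp jA = fA ∧ f.comp jB = fB
/-- The defining relators of a right-angled Artin group: commutators of adjacent
generators. -/
def raagRels {V : Type} (Γ : SimpleGraph V) : Set (FreeGroup V) :=
  {r | ∃ u v : V, Γ.Adj u v ∧
    r = FreeGroup.of u * FreeGroup.of v * (FreeGroup.of u)⁻¹ * (FreeGroup.of v)⁻¹}

/-- The right-angled Artin group with defining graph `Γ`. -/
abbrev RAAG {V : Type} (Γ : SimpleGraph V) : Type := PresentedGroup (raagRels Γ)

/-- The standard generator of `RAAG Γ` corresponding to the vertex `v`. -/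
def raagGen {V : Type} (Γ : SimpleGraph V) (v : V) : RAAG Γ :=
  PresentedGroup.of v

/-- The parabolic subgroup of `RAAG Γ` generated by the vertices in `S`. -/
def raagParabolic {V : Type} (Γ : SimpleGraph V) (S : Set V) : Subgroup (RAAG Γ) :=
  Subgroup.closure (raagGen Γ '' S)

/-- The defining graph of the Croke–Kleiner group: the path `a - b - c - d`. -/
abbrev CKGraph : SimpleGraph (Fin 4) := SimpleGraph.pathGraph 4

/-- The Croke–Kleiner right-angled Artin group
`CK = ⟨a,b,c,d | [a,b],[b,c],[c,d]⟩` (generators `a,b,c,d` are `0,1,2,3`). -/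
abbrev CK : Type := RAAG CKGraph

lemma raagParabolic_mono {V : Type} (Γ : SimpleGraph V) {S T : Set V} (h : S ⊆ T) :
    raagParabolic Γ S ≤ raagParabolic Γ T :=
  Subgroup.closure_mono (Set.image_mono h)

/-- A model of the universal cover of the Salvetti complex of `A_Γ`: a proper complete
CAT(0) space with a free geometric action of `A_Γ`, together with, for each parabolic
subgroup, the closed convex subcomplex it stabilizes cocompactly. -/
structure SalvettiModel {V : Type} (Γ : SimpleGraph V) where
  X : Type
  [ms : MetricSpace X]
  [proper : ProperSpace X]
  [complete : CompleteSpace X]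
  nonempty : Nonempty X
  cat0 : IsCAT0 X
  ρ : RAAG Γ →* (X ≃ᵢ X)
  geometric : IsGeometricAction ρ
  free : ∀ g : RAAG Γ, g ≠ 1 → ∀ x : X, (ρ g) x ≠ x
  parabSub : Set V → Set X
  parabSub_closed : ∀ S : Set V, IsClosed (parabSub S)
  parabSub_convex : ∀ S : Set V, IsGeodesicallyConvex (parabSub S)
  parabSub_geometric : ∀ S : Set V,
    IsGeometricActionOn (ρ.comp (raagParabolic Γ S).subtype) (parabSub S)

attribute [instance] SalvettiModel.ms SalvettiModel.proper SalvettiModel.complete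

/-- A bundled nonempty proper complete CAT(0) space. -/
structure CAT0Bundle : Type 1 where
  X : Type
  [ms : MetricSpace X]
  [proper : ProperSpace X]
  [complete : CompleteSpace X]
  nonempty : Nonempty X
  cat0 : IsCAT0 X

attribute [instance] CAT0Bundle.ms CAT0Bundle.proper CAT0Bundle.complete

/-- A CAT(0) group: a group admitting a geometric action on a proper complete CAT(0)
space. -/
def IsCAT0Group (G : Type) [Group G] : Prop :=
  ∃ (𝒳 : CAT0Bundle) (ρ : G →* (𝒳.X ≃ᵢ 𝒳.X)), IsGeometricAction ρ

/-- A space is `n`-connected if it is nonempty, path connected, and its homotopy groups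
`π_i` vanish for `1 ≤ i ≤ n`. -/
def NConnected (n : ℕ) (Z : Type*) [TopologicalSpace Z] : Prop :=
  Nonempty Z ∧ PathConnectedSpace Z ∧
    ∀ i : ℕ, 1 ≤ i → i ≤ n → ∀ z : Z, Subsingleton (HomotopyGroup (Fin i) Z z)

/-- The (unreduced) suspension of a topological space. -/
def Suspension (W : Type*) [TopologicalSpace W] : Type _ :=
  Quot (fun p q : W × unitInterval =>
    p = q ∨ (p.2 = 0 ∧ q.2 = 0) ∨ (p.2 = 1 ∧ q.2 = 1))

instance (W : Type*) [TopologicalSpace W] : TopologicalSpace (Suspension W) := by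
  unfold Suspension; infer_instance

/-- The open cone on a topological space: `W × [0,1)` with `W × {0}` collapsed. -/
def OpenCone (W : Type*) [TopologicalSpace W] : Type _ :=
  Quot (fun p q : W × Set.Ico (0 : ℝ) 1 => p = q ∨ ((p.2 : ℝ) = 0 ∧ (q.2 : ℝ) = 0))

instance (W : Type*) [TopologicalSpace W] : TopologicalSpace (OpenCone W) := by
  unfold OpenCone; infer_instance

/-- The defining relation of the topological join `X ∗ Y` on `X × Y × [0,1]`:
`(x,y,0) ∼ (x,y',0)` and `(x,y,1) ∼ (x',y,1)`. -/
def joinRel (X Y : Type*) (p q : X × Y × unitInterval) : Prop :=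
  (p.2.2 = 0 ∧ q.2.2 = 0 ∧ p.1 = q.1) ∨ (p.2.2 = 1 ∧ q.2.2 = 1 ∧ p.2.1 = q.2.1) ∨ p = q

/-- The topological join `X ∗ Y`: the quotient of `X × Y × [0,1]` identifying
`(x,y,0) ∼ (x,y',0)` and `(x,y,1) ∼ (x',y,1)`. -/
def TopJoin (X Y : Type*) [TopologicalSpace X] [TopologicalSpace Y] : Type _ :=
  Quot (joinRel X Y)

/-- The quotient map onto the topological join. -/
def TopJoin.mk {X Y : Type*} [TopologicalSpace X] [TopologicalSpace Y]
    (p : X × Y × unitInterval) : TopJoin X Y :=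
  Quot.mk (joinRel X Y) p

instance (X Y : Type*) [TopologicalSpace X] [TopologicalSpace Y] :
    TopologicalSpace (TopJoin X Y) := by
  unfold TopJoin; infer_instance

/-- The Croke–Kleiner block decomposition of (a model of) the universal cover of the
Salvetti complex of `CK`: the blocks are the `CK`-translates of the convex subcomplexes
stabilized by the parabolic subgroups `⟨a,b,c⟩` and `⟨b,c,d⟩`, i.e. the blocks coming
from the splitting `CK = ⟨a,b,c⟩ ∗_{⟨b,c⟩} ⟨b,c,d⟩ ≅ (F₂ × ℤ) ∗_{ℤ²} (F₂ × ℤ)`. -/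
def IsCKBlockDecomposition (M : SalvettiModel CKGraph)
    (𝓑 : BlockDecomposition M.X Set.univ) : Prop :=
  𝓑.blocks = {S : Set M.X | ∃ g : CK,
    S = (M.ρ g) '' M.parabSub ({0, 1, 2} : Set (Fin 4)) ∨
    S = (M.ρ g) '' M.parabSub ({1, 2, 3} : Set (Fin 4))}

/-- The `ℓ²`-product `Z = X × ℝ^{n+1}` (so that `Z` is again CAT(0) when `X` is). -/
abbrev ZProd (X : Type) [MetricSpace X] (n : ℕ) : Type :=
  WithLp 2 (X × EuclideanSpace ℝ (Fin (n + 1)))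

/-- The `X`-coordinate of a point of `Z = X × ℝ^{n+1}`. -/
def ZProd.fst {X : Type} [MetricSpace X] {n : ℕ} (z : ZProd X n) : X :=
  (WithLp.equiv 2 (X × EuclideanSpace ℝ (Fin (n + 1))) z).1

/-- The block decomposition of `Z = X × ℝ^{n+1}` whose blocks are the products of the
blocks of a block decomposition of `X` with the `ℝ^{n+1}` factor. -/
def IsCylinderDecomposition {X : Type} [MetricSpace X] {n : ℕ}
    (𝓑X : BlockDecomposition X Set.univ)
    (𝓑Z : BlockDecomposition (ZProd X n) Set.univ) : Prop :=
  𝓑Z.blocks = {S : Set (ZProd X n) | ∃ B ∈ 𝓑X.blocks,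
    S = {z : ZProd X n | ZProd.fst z ∈ B}}

/-- The set of poles of a block `B`: the intersection of the boundaries of the walls
of `B`.  (For a block `T₄ × ℝ^{n+2}`, with boundary the join `𝒞 ∗ S^{n+1}` of a Cantor
set and a sphere, this is exactly the sphere `S^{n+1} = ∂(ℝ^{n+2})` of poles.) -/
def poles {X : Type*} [MetricSpace X] {S : Set X} (x0 : X)
    (𝓑 : BlockDecomposition X S) (B : Set X) : Set (VisualBoundary X x0) :=
  ⋂ B' ∈ {B' | B' ∈ 𝓑.blocks ∧ B' ≠ B ∧ (B ∩ B').Nonempty}, limitSet x0 (B ∩ B')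

/-- The `Sⁿ` join factor of `∂Z = ∂X ∗ Sⁿ` for `Z = X × ℝ^{n+1}`: the boundary points
of rays with constant `X`-coordinate. -/
def sphereFactor {X : Type} [MetricSpace X] {n : ℕ} (z0 : ZProd X n) :
    Set (VisualBoundary (ZProd X n) z0) :=
  {ξ | ∀ t : ℝ, 0 ≤ t → ZProd.fst (ξ.1 t) = ZProd.fst z0}

/-!
A finite initial segment of the itinerary of a boundary point `ξ` with infinite itinerary is still
one for every boundary point near `ξ`. Blocks are closed, convex and locally finite (no three come
within `eps` of a point), so entering a block is an open condition; and a block that the ray of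
`ξ` touches without entering it is touched along a wall `C ∩ D`, bracketed by two entries into `D`
between which nearby rays are trapped in `D`. Initial segments of an infinite itinerary are
determined by their cardinality, so failing to be an initial segment is an open condition too.
Along a path of points with infinite itineraries the initial segments are therefore the same at
all times, and they determine the itinerary.
-/

section Rays

variable {X : Type*} [MetricSpace X] {z0 : X} {γ : ℝ → X}

theorem IsGeodesicRay.dist_eq (hγ : IsGeodesicRay z0 γ) {s t : ℝ} (hs : 0 ≤ s) (ht : 0 ≤ t) :
    dist (γ s) (γ t) = |s - t| :=
  hγ.2 s hs t ht

theorem IsGeodesicRay.continuousOn (hγ : IsGeodesicRay z0 γ) : ContinuousOn γ (Ici 0) :=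
  (LipschitzOnWith.of_dist_le_mul fun s hs t ht => by
    rw [hγ.dist_eq hs ht, Real.dist_eq, NNReal.coe_one, one_mul]).continuousOn

theorem IsGeodesicRay.ordConnected_preimage (hγ : IsGeodesicRay z0 γ) {B : Set X}
    (hB : IsGeodesicallyConvex B) : (Ici 0 ∩ γ ⁻¹' B).OrdConnected := by
  refine ⟨fun s ⟨(hs : 0 ≤ s), hsB⟩ t ⟨(ht : 0 ≤ t), htB⟩ u hu => ⟨hs.trans hu.1, ?_⟩⟩
  have hst : dist (γ s) (γ t) = t - s := by
    rw [hγ.dist_eq hs ht, abs_sub_comm, abs_of_nonneg (by linarith [hu.1.trans hu.2])]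
  have hseg : IsGeodesicSegment (fun w => γ (min (s + w) t)) (γ s) (γ t) := by
    refine ⟨by simp [hu.1.trans hu.2], fun a ha b hb => ?_, fun w hw => ?_⟩
    · rw [hst] at ha hb
      dsimp only
      rw [min_eq_left (by linarith [ha.2]), min_eq_left (by linarith [hb.2]),
        hγ.dist_eq (by linarith [ha.1]) (by linarith [hb.1])]
      ring_nf
    · rw [hst] at hw
      dsimp only
      rw [min_eq_right (by linarith)]
  simpa [hu.2] using hB _ hsB _ htB _ hseg (u - s) ⟨by linarith [hu.1], by linarith [hu.2]⟩

end Rays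

namespace VisualBoundary

variable {X : Type*} [MetricSpace X] {z0 : X}

theorem eventually_dist_lt (ξ : VisualBoundary X z0) {t ε : ℝ} (ht : 0 ≤ t) (hε : 0 < ε) :
    ∀ᶠ η in 𝓝 ξ, dist (ξ.1 t) (η.1 t) < ε := by
  rcases ht.eq_or_lt with rfl | ht
  · exact Eventually.of_forall fun η => by simpa [ξ.2.1, η.2.1] using hε
  · exact IsOpen.mem_nhds (TopologicalSpace.isOpen_generateFrom_of_mem ⟨ξ, t, ε, ht, hε, rfl⟩)
      (by simpa using hε)

theorem eventually_forall_dist_lt (ξ : VisualBoundary X z0) (R : ℝ) {ε : ℝ} (hε : 0 < ε) :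
    ∀ᶠ η in 𝓝 ξ, ∀ t ∈ Icc 0 R, dist (ξ.1 t) (η.1 t) < ε := by
  -- rays are 1-Lipschitz, so closeness on the grid `(ε / 3) ℕ` spreads to all of `[0, R]`
  set D := ε / 3
  have hD : 0 < D := by positivity
  have hgrid : ∀ᶠ η in 𝓝 ξ, ∀ i ∈ Finset.range (⌊R / D⌋₊ + 1),
      dist (ξ.1 (i * D)) (η.1 (i * D)) < D :=
    (Finset.eventually_all _).2 fun i _ => ξ.eventually_dist_lt (by positivity) hD
  filter_upwards [hgrid] with η hη t ht
  set j := ⌊t / D⌋₊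
  have hjt : (j : ℝ) * D ≤ t := (le_div_iff₀ hD).1 (Nat.floor_le (div_nonneg ht.1 hD.le))
  have htj : t < (j : ℝ) * D + D := by
    have := Nat.lt_floor_add_one (t / D)
    rw [div_lt_iff₀ hD] at this
    linarith
  have hjR : j ∈ Finset.range (⌊R / D⌋₊ + 1) :=
    Finset.mem_range.2 (Nat.lt_succ_of_le (Nat.floor_le_floor (by gcongr; exact ht.2)))
  have hj0 : 0 ≤ (j : ℝ) * D := by positivity
  have h₁ : |t - j * D| < D := by rw [abs_lt]; constructor <;> linarith
  have h₂ : |j * D - t| < D := by rw [abs_lt]; constructor <;> linarith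
  calc dist (ξ.1 t) (η.1 t)
      ≤ dist (ξ.1 t) (ξ.1 (j * D)) + dist (ξ.1 (j * D)) (η.1 (j * D)) +
          dist (η.1 (j * D)) (η.1 t) := dist_triangle4 _ _ _ _
    _ < D + D + D := by
      rw [ξ.2.dist_eq ht.1 hj0, η.2.dist_eq hj0 ht.1]
      linarith [hη j hjR]
    _ = ε := by ring

theorem eventually_forall_notMem (ξ : VisualBoundary X z0) {C : Set X} (hC : IsClosed C)
    {J : Set ℝ} (hJ : IsCompact J) (hJ0 : J ⊆ Ici 0) (hξ : ∀ σ ∈ J, ξ.1 σ ∉ C) :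
    ∀ᶠ η in 𝓝 ξ, ∀ σ ∈ J, η.1 σ ∉ C := by
  have hK := hJ.image_of_continuousOn (ξ.2.continuousOn.mono hJ0)
  obtain ⟨δ, hδ, hδC⟩ := hK.exists_thickening_subset_open hC.isOpen_compl
    (by rintro _ ⟨σ, hσ, rfl⟩; exact hξ σ hσ)
  obtain ⟨R, hR⟩ := hJ.bddAbove
  filter_upwards [ξ.eventually_forall_dist_lt R hδ] with η hη σ hσ
  exact hδC (mem_thickening_iff.2
    ⟨ξ.1 σ, mem_image_of_mem _ hσ, by rw [dist_comm]; exact hη σ ⟨hJ0 hσ, hR hσ⟩⟩)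

end VisualBoundary

namespace BlockDecomposition

variable {X : Type*} [MetricSpace X] {Y : Set X} (𝓑 : BlockDecomposition X Y)

/-- Intersecting blocks have opposite parities, so no three blocks pairwise intersect, and
`eps_cond` turns nearness to a common point into intersection. -/
theorem eq_of_mem_thickening {x : X} {B B₁ B₂ : Set X} (hB : B ∈ 𝓑.blocks)
    (hB₁ : B₁ ∈ 𝓑.blocks) (hB₂ : B₂ ∈ 𝓑.blocks) (h₁ : B₁ ≠ B) (h₂ : B₂ ≠ B)
    (hx : x ∈ thickening 𝓑.eps B) (hx₁ : x ∈ thickening 𝓑.eps B₁)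
    (hx₂ : x ∈ thickening 𝓑.eps B₂) : B₁ = B₂ := by
  have parity_ne : ∀ {C D}, C ∈ 𝓑.blocks → D ∈ 𝓑.blocks → C ≠ D →
      x ∈ thickening 𝓑.eps C → x ∈ thickening 𝓑.eps D → 𝓑.parity C ≠ 𝓑.parity D :=
    fun hC hD hCD hxC hxD =>
      𝓑.parity_cond _ hC _ hD hCD ((𝓑.eps_cond _ hC _ hD hCD).2 ⟨x, hxC, hxD⟩)
  by_contra h₁₂
  have h₁' := parity_ne hB₁ hB h₁ hx₁ hx
  have h₂' := parity_ne hB₂ hB h₂ hx₂ hx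
  have h₁₂' := parity_ne hB₁ hB₂ h₁₂ hx₁ hx₂
  revert h₁' h₂' h₁₂'
  cases 𝓑.parity B <;> cases 𝓑.parity B₁ <;> cases 𝓑.parity B₂ <;> decide

theorem finite_setOf_mem_thickening (x : X) :
    {B ∈ 𝓑.blocks | x ∈ thickening 𝓑.eps B}.Finite := by
  rcases eq_empty_or_nonempty {B ∈ 𝓑.blocks | x ∈ thickening 𝓑.eps B} with h | ⟨B, hB, hxB⟩
  · simp [h]
  exact Finite.of_sdiff (Subsingleton.finite fun B₁ h₁ B₂ h₂ =>
    𝓑.eq_of_mem_thickening hB h₁.1.1 h₂.1.1 h₁.2 h₂.2 hxB h₁.1.2 h₂.1.2) (finite_singleton B)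

theorem finite_setOf_inter_thickening_nonempty {K : Set X} (hK : IsCompact K) :
    {B ∈ 𝓑.blocks | (B ∩ thickening (𝓑.eps / 2) K).Nonempty}.Finite := by
  obtain ⟨T, -, hT, hKT⟩ := finite_cover_balls_of_compact hK (half_pos 𝓑.eps_pos)
  refine (hT.biUnion fun x _ => 𝓑.finite_setOf_mem_thickening x).subset ?_
  rintro B ⟨hB, y, hyB, hyK⟩
  obtain ⟨k, hk, hyk⟩ := mem_thickening_iff.1 hyK
  obtain ⟨x, hx, hkx⟩ := mem_iUnion₂.1 (hKT hk)
  refine mem_iUnion₂.2 ⟨x, hx, hB, mem_thickening_iff.2 ⟨y, hyB, ?_⟩⟩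
  calc dist x y ≤ dist k x + dist y k := by rw [dist_comm k x]; exact dist_triangle_right ..
    _ < 𝓑.eps / 2 + 𝓑.eps / 2 := add_lt_add (mem_ball.1 hkx) hyk
    _ = 𝓑.eps := add_halves _

theorem finite_setOf_exists_mem_Icc {z0 : X} {γ : ℝ → X} (hγ : IsGeodesicRay z0 γ) (T : ℝ) :
    {B ∈ 𝓑.blocks | ∃ t ∈ Icc 0 T, γ t ∈ B}.Finite :=
  (𝓑.finite_setOf_inter_thickening_nonempty
    (isCompact_Icc.image_of_continuousOn (hγ.continuousOn.mono Icc_subset_Ici_self))).subset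
    fun _ ⟨hB, t, ht, htB⟩ =>
      ⟨hB, γ t, htB, self_subset_thickening (half_pos 𝓑.eps_pos) _ (mem_image_of_mem γ ht)⟩

end BlockDecomposition

section Entries

variable {X : Type*} [MetricSpace X] {Y : Set X} {𝓑 : BlockDecomposition X Y} {z0 : X}
  {γ : ℝ → X} {B C : Set X} {s t : ℝ}

namespace entersAt

theorem nonneg (h : entersAt 𝓑 γ B t) : 0 ≤ t := h.1

theorem mem_blocks (h : entersAt 𝓑 γ B t) : B ∈ 𝓑.blocks := h.2.1

theorem mem (h : entersAt 𝓑 γ B t) : γ t ∈ B := h.2.2.1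

theorem notMem (h : entersAt 𝓑 γ B t) : ∀ B' ∈ 𝓑.blocks, B' ≠ B → γ t ∉ B' := h.2.2.2

theorem unique (hB : entersAt 𝓑 γ B t) (hC : entersAt 𝓑 γ C t) : B = C :=
  by_contra fun hne => hC.notMem B hB.mem_blocks hne hB.mem

theorem eq_of_mem_Icc (hC : entersAt 𝓑 γ C s) (hγ : IsGeodesicRay z0 γ) (hB : B ∈ 𝓑.blocks)
    {t₁ t₂ : ℝ} (ht₁ : 0 ≤ t₁) (h₁ : γ t₁ ∈ B) (h₂ : γ t₂ ∈ B) (hs : s ∈ Icc t₁ t₂) : C = B :=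
  by_contra fun hne => hC.notMem B hB (Ne.symm hne)
    ((hγ.ordConnected_preimage (𝓑.convex B hB)).out ⟨ht₁, h₁⟩
      ⟨ht₁.trans (hs.1.trans hs.2), h₂⟩ hs).2

theorem lt_of_le (hB : entersAt 𝓑 γ B t) (hγ : IsGeodesicRay z0 γ) (hne : B ≠ C)
    (hC : entersAt 𝓑 γ C s) (hts : t ≤ s) {t' s' : ℝ} (hB' : entersAt 𝓑 γ B t')
    (hC' : entersAt 𝓑 γ C s') : t' < s' := by
  by_contra! h
  rcases le_or_gt s' t with h' | h'
  · exact hne (hB.eq_of_mem_Icc hγ hC.mem_blocks hC'.nonneg hC'.mem hC.mem ⟨h', hts⟩)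
  · exact hne (hC'.eq_of_mem_Icc hγ hB.mem_blocks hB.nonneg hB.mem hB'.mem ⟨h'.le, h⟩).symm

end entersAt

theorem exists_mem_ne_of_not_entersAt (hs : 0 ≤ s) (hC : C ∈ 𝓑.blocks) (hsC : γ s ∈ C)
    (hnot : ¬entersAt 𝓑 γ C s) : ∃ D ∈ 𝓑.blocks, D ≠ C ∧ γ s ∈ D := by
  simpa [entersAt, hs, hC, hsC] using hnot

theorem IsGeodesicRay.finite_enteredBlocks_of_forall_mem (hγ : IsGeodesicRay z0 γ)
    (hC : C ∈ 𝓑.blocks) {T : ℝ} (hT : ∀ t ≥ T, γ t ∈ C) : (enteredBlocks 𝓑 γ).Finite := by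
  refine ((𝓑.finite_setOf_exists_mem_Icc hγ T).insert C).subset fun B ⟨t, hB⟩ => ?_
  rcases le_or_gt t T with htT | hTt
  · exact Or.inr ⟨hB.mem_blocks, t, ⟨hB.nonneg, htT⟩, hB.mem⟩
  · exact Or.inl (by_contra fun hne => hB.notMem C hC (Ne.symm hne) (hT t hTt.le))

theorem IsGeodesicRay.isCompact_preimage_of_infinite (hγ : IsGeodesicRay z0 γ)
    (hinf : (enteredBlocks 𝓑 γ).Infinite) (hC : C ∈ 𝓑.blocks) :
    IsCompact (Ici 0 ∩ γ ⁻¹' C) := by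
  refine isCompact_of_isClosed_isBounded
    (hγ.continuousOn.preimage_isClosed_of_isClosed isClosed_Ici (𝓑.closed C hC))
    (isBounded_iff_bddBelow_bddAbove.2 ⟨⟨0, fun _ h => h.1⟩, by_contra fun hI => hinf ?_⟩)
  rcases (Ici 0 ∩ γ ⁻¹' C).eq_empty_or_nonempty with h | ⟨σ₀, hσ₀⟩
  · exact absurd (h ▸ bddAbove_empty) hI
  refine hγ.finite_enteredBlocks_of_forall_mem hC (T := σ₀) fun t ht => ?_
  obtain ⟨w, hw, htw⟩ := not_bddAbove_iff.1 hI t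
  exact ((hγ.ordConnected_preimage (𝓑.convex C hC)).out hσ₀ hw ⟨ht, htw.le⟩).2

theorem IsGeodesicRay.forall_mem_of_not_entersAt (hγ : IsGeodesicRay z0 γ)
    (hC : C ∈ 𝓑.blocks) {D : Set X} (hD : D ∈ 𝓑.blocks) (hDC : D ≠ C) {α β : ℝ} (hα : 0 ≤ α)
    (hαβ : α ≤ β) (hCαβ : ∀ s ∈ Icc α β, γ s ∈ C) (hnot : ∀ s, ¬entersAt 𝓑 γ C s)
    (hβD : γ β ∈ D) : ∀ s ∈ Icc α β, γ s ∈ D := by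
  -- by local finiteness, the second block containing `γ s` is the same for times `eps`-close
  have step : ∀ s ∈ Icc α β, ∀ s' ∈ Icc α β, dist s s' < 𝓑.eps → γ s ∈ D → γ s' ∈ D := by
    intro s hs s' hs' hss' hsD
    obtain ⟨D', hD', hD'C, hs'D'⟩ :=
      exists_mem_ne_of_not_entersAt (hα.trans hs'.1) hC (hCαβ s' hs') (hnot s')
    have hnear : γ s ∈ thickening 𝓑.eps D' := mem_thickening_iff.2 ⟨γ s', hs'D', by
      rwa [hγ.dist_eq (hα.trans hs.1) (hα.trans hs'.1), ← Real.dist_eq]⟩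
    rwa [𝓑.eq_of_mem_thickening hC hD' hD hD'C hDC (self_subset_thickening 𝓑.eps_pos _
      (hCαβ s hs)) hnear (self_subset_thickening 𝓑.eps_pos _ hsD)] at hs'D'
  intro s hs
  refine (isPreconnected_Icc.induction₂' (fun s s' => γ s ∈ D ↔ γ s' ∈ D) (fun s hs => ?_)
    (fun _ _ _ _ _ _ => Iff.trans) ⟨hαβ, le_rfl⟩ hs).1 hβD
  filter_upwards [self_mem_nhdsWithin, nhdsWithin_le_nhds (ball_mem_nhds s 𝓑.eps_pos)]
    with s' hs' hs's
  have hss' : dist s s' < 𝓑.eps := by rwa [dist_comm]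
  exact ⟨⟨step s hs s' hs' hss', step s' hs' s hs hs's⟩,
    ⟨step s' hs' s hs hs's, step s hs s' hs' hss'⟩⟩

end Entries

section InitialSegments

variable {X : Type*} [MetricSpace X] {Y : Set X} {𝓑 : BlockDecomposition X Y} {z0 : X}
  {γ : ℝ → X} {B C : Set X} {s t : ℝ}

variable (𝓑) in
structure IsItineraryPrefix (γ : ℝ → X) (S : Set (Set X)) : Prop where
  finite : S.Finite
  subset_enteredBlocks : S ⊆ enteredBlocks 𝓑 γ
  mem_of_entersAt_le : ∀ ⦃B⦄, B ∈ S → ∀ ⦃C s t⦄, entersAt 𝓑 γ B s → entersAt 𝓑 γ C t → t ≤ s →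
    C ∈ S

variable (𝓑) in
def blocksEnteredBy (γ : ℝ → X) (T : ℝ) : Set (Set X) :=
  {B | ∃ t ≤ T, entersAt 𝓑 γ B t}

theorem isItineraryPrefix_empty : IsItineraryPrefix 𝓑 γ ∅ :=
  ⟨finite_empty, empty_subset _, fun _ h => absurd h (notMem_empty _)⟩

theorem IsGeodesicRay.isItineraryPrefix_blocksEnteredBy (hγ : IsGeodesicRay z0 γ) (T : ℝ) :
    IsItineraryPrefix 𝓑 γ (blocksEnteredBy 𝓑 γ T) := by
  refine ⟨(𝓑.finite_setOf_exists_mem_Icc hγ T).subset fun B ⟨t, htT, hB⟩ =>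
      ⟨hB.mem_blocks, t, ⟨hB.nonneg, htT⟩, hB.mem⟩,
    fun B ⟨t, _, hB⟩ => ⟨t, hB⟩, fun B ⟨t₀, ht₀, hB₀⟩ C s t hBs hCt hts => ?_⟩
  rcases le_or_gt t T with htT | hTt
  · exact ⟨t, htT, hCt⟩
  · rw [hCt.eq_of_mem_Icc hγ hB₀.mem_blocks hB₀.nonneg hB₀.mem hBs.mem ⟨ht₀.trans hTt.le, hts⟩]
    exact ⟨t₀, ht₀, hB₀⟩

theorem IsGeodesicRay.notMem_blocksEnteredBy (hγ : IsGeodesicRay z0 γ) (hne : B ≠ C)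
    (hB : entersAt 𝓑 γ B t) (hC : entersAt 𝓑 γ C s) (hts : t ≤ s) :
    C ∉ blocksEnteredBy 𝓑 γ t := fun ⟨_, hs't, hC'⟩ =>
  hne (hB.eq_of_mem_Icc hγ hC.mem_blocks hC'.nonneg hC'.mem hC.mem ⟨hs't, hts⟩)

namespace IsItineraryPrefix

variable {S T : Set (Set X)}

theorem subset_or_subset (hS : IsItineraryPrefix 𝓑 γ S) (hT : IsItineraryPrefix 𝓑 γ T) :
    S ⊆ T ∨ T ⊆ S := by
  by_contra! h
  obtain ⟨B, hBS, hBT⟩ := not_subset.1 h.1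
  obtain ⟨C, hCT, hCS⟩ := not_subset.1 h.2
  obtain ⟨s, hBs⟩ := hS.subset_enteredBlocks hBS
  obtain ⟨t, hCt⟩ := hT.subset_enteredBlocks hCT
  rcases le_total t s with hts | hst
  · exact hCS (hS.mem_of_entersAt_le hBS hBs hCt hts)
  · exact hBT (hT.mem_of_entersAt_le hCT hCt hBs hst)

theorem eq_of_ncard_eq (hS : IsItineraryPrefix 𝓑 γ S) (hT : IsItineraryPrefix 𝓑 γ T)
    (h : S.ncard = T.ncard) : S = T := by
  rcases hS.subset_or_subset hT with hST | hTS
  · exact eq_of_subset_of_ncard_le hST h.ge hT.finite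
  · exact (eq_of_subset_of_ncard_le hTS h.le hS.finite).symm

theorem exists_last (hS : IsItineraryPrefix 𝓑 γ S) (hne : S.Nonempty) :
    ∃ F ∈ S, ∃ τ, entersAt 𝓑 γ F τ ∧ ∀ B ∈ S, ∃ t ≤ τ, entersAt 𝓑 γ B t := by
  choose! e he using fun B (hB : B ∈ S) => hS.subset_enteredBlocks hB
  obtain ⟨F, hF, hmax⟩ := exists_max_image S e hS.finite hne
  exact ⟨F, hF, e F, he F hF, fun B hB => ⟨e B, hmax B hB, he B hB⟩⟩

theorem sdiff_singleton (hS : IsItineraryPrefix 𝓑 γ S) (hγ : IsGeodesicRay z0 γ) {F : Set X}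
    {τ : ℝ} (hFτ : entersAt 𝓑 γ F τ) (hlast : ∀ B ∈ S, ∃ t ≤ τ, entersAt 𝓑 γ B t) :
    IsItineraryPrefix 𝓑 γ (S \ {F}) := by
  refine ⟨hS.finite.sdiff, sdiff_subset.trans hS.subset_enteredBlocks,
    fun B hB C s t hBs hCt hts => ⟨hS.mem_of_entersAt_le hB.1 hBs hCt hts, ?_⟩⟩
  rintro rfl
  obtain ⟨t', ht'τ, hBt'⟩ := hlast B hB.1
  exact (hCt.lt_of_le hγ (Ne.symm hB.2) hBs hts hFτ hBt').not_ge ht'τ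

theorem exists_ncard_eq (hS : IsItineraryPrefix 𝓑 γ S) (hγ : IsGeodesicRay z0 γ) {k : ℕ}
    (hk : k ≤ S.ncard) : ∃ S', IsItineraryPrefix 𝓑 γ S' ∧ S'.ncard = k := by
  obtain ⟨d, hd⟩ := Nat.exists_eq_add_of_le hk
  induction d generalizing S with
  | zero => exact ⟨S, hS, hd⟩
  | succ d ih =>
    obtain ⟨F, hF, τ, hFτ, hlast⟩ := hS.exists_last (nonempty_of_ncard_ne_zero (by omega))
    exact ih (hS.sdiff_singleton hγ hFτ hlast) (by rw [ncard_sdiff_singleton_of_mem hF]; omega)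
      (by rw [ncard_sdiff_singleton_of_mem hF]; omega)

theorem forall_notMem (hS : IsItineraryPrefix 𝓑 γ S) (hγ : IsGeodesicRay z0 γ) {F : Set X}
    {τ : ℝ} (hF : F ∈ S) (hFτ : entersAt 𝓑 γ F τ) (hC : C ∈ enteredBlocks 𝓑 γ) (hCS : C ∉ S) :
    ∀ σ ∈ Icc 0 τ, γ σ ∉ C := by
  intro σ hσ hσC
  obtain ⟨w, hw⟩ := hC
  rcases le_or_gt w τ with hwτ | hτw
  · exact hCS (hS.mem_of_entersAt_le hF hFτ hw hwτ)
  · exact hCS (hFτ.eq_of_mem_Icc hγ hw.mem_blocks hσ.1 hσC hw.mem ⟨hσ.2, hτw.le⟩ ▸ hF)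

end IsItineraryPrefix

theorem IsGeodesicRay.exists_isItineraryPrefix_ncard_eq (hγ : IsGeodesicRay z0 γ)
    (hinf : (enteredBlocks 𝓑 γ).Infinite) (k : ℕ) :
    ∃ S, IsItineraryPrefix 𝓑 γ S ∧ S.ncard = k := by
  obtain ⟨F, hFsub, hF, hFk⟩ := hinf.exists_subset_ncard_eq k
  choose! e he using fun B (hB : B ∈ F) => hFsub hB
  obtain ⟨T, hT⟩ := (hF.image e).bddAbove
  have hP := hγ.isItineraryPrefix_blocksEnteredBy (𝓑 := 𝓑) T
  refine hP.exists_ncard_eq hγ (hFk ▸ ncard_le_ncard (fun B hB => ?_) hP.finite)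
  exact ⟨e B, hT (mem_image_of_mem e hB), he B hB⟩

theorem IsGeodesicRay.enteredBlocks_subset {γ' : ℝ → X} (hγ : IsGeodesicRay z0 γ)
    (h : ∀ S, IsItineraryPrefix 𝓑 γ S → IsItineraryPrefix 𝓑 γ' S) :
    enteredBlocks 𝓑 γ ⊆ enteredBlocks 𝓑 γ' := fun _ ⟨t, hBt⟩ =>
  (h _ (hγ.isItineraryPrefix_blocksEnteredBy t)).subset_enteredBlocks ⟨t, le_rfl, hBt⟩

theorem sameItinerary_of_forall_isItineraryPrefix_iff {z0' : X} {γ' : ℝ → X}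
    (hγ : IsGeodesicRay z0 γ) (hγ' : IsGeodesicRay z0' γ')
    (h : ∀ S, IsItineraryPrefix 𝓑 γ S ↔ IsItineraryPrefix 𝓑 γ' S) : SameItinerary 𝓑 γ γ' := by
  have hentered := (hγ.enteredBlocks_subset fun S => (h S).1).antisymm
    (hγ'.enteredBlocks_subset fun S => (h S).2)
  refine ⟨hentered, fun B B' t s hBt hB's hts => ?_⟩
  obtain ⟨t', hBt'⟩ := hentered.subset ⟨t, hBt⟩
  obtain ⟨s', hB's'⟩ := hentered.subset ⟨s, hB's⟩
  rcases eq_or_ne B B' with rfl | hne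
  · exact ⟨t', t', hBt', hBt', le_rfl⟩
  -- the blocks entered by time `t` form an initial segment containing `B` but not `B'`
  have hP := (h _).1 (hγ.isItineraryPrefix_blocksEnteredBy t)
  refine ⟨t', s', hBt', hB's', le_of_not_ge fun hst => ?_⟩
  exact hγ.notMem_blocksEnteredBy hne hBt hB's hts
    (hP.mem_of_entersAt_le ⟨t, le_rfl, hBt⟩ hBt' hB's' hst)

end InitialSegments

section Stability

variable {X : Type*} [MetricSpace X] {𝓑 : BlockDecomposition X univ} {z0 : X} {B C : Set X}

theorem BlockDecomposition.exists_mem_block (𝓑 : BlockDecomposition X univ) (x : X) :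
    ∃ B ∈ 𝓑.blocks, x ∈ B :=
  mem_sUnion.1 (𝓑.covers.symm ▸ mem_univ x)

theorem BlockDecomposition.eventually_mem_and_forall_notMem {x : X} (hB : B ∈ 𝓑.blocks)
    (hx : x ∈ B) (hexcl : ∀ B' ∈ 𝓑.blocks, B' ≠ B → x ∉ B') :
    ∀ᶠ y in 𝓝 x, y ∈ B ∧ ∀ B' ∈ 𝓑.blocks, B' ≠ B → y ∉ B' := by
  set 𝒩 := {B' ∈ 𝓑.blocks | x ∈ thickening 𝓑.eps B'}
  have hfar : ∀ᶠ y in 𝓝 x, ∀ B' ∈ 𝒩 \ {B}, y ∉ B' :=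
    (𝓑.finite_setOf_mem_thickening x).sdiff.eventually_all.2 fun B' hB' =>
      (𝓑.closed B' hB'.1.1).isOpen_compl.mem_nhds (hexcl B' hB'.1.1 hB'.2)
  filter_upwards [hfar, ball_mem_nhds x 𝓑.eps_pos] with y hy hyx
  have hnot : ∀ B' ∈ 𝓑.blocks, B' ≠ B → y ∉ B' := fun B' hB' hne hyB' =>
    hy B' ⟨⟨hB', mem_thickening_iff.2 ⟨y, hyB', by rwa [dist_comm]⟩⟩, hne⟩ hyB'
  obtain ⟨E, hE, hyE⟩ := 𝓑.exists_mem_block y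
  obtain rfl : E = B := by_contra fun hne => hnot E hE hne hyE
  exact ⟨hyE, hnot⟩

theorem BlockDecomposition.mem_and_forall_notMem_of_near_wall (hC : C ∈ 𝓑.blocks) {D : Set X}
    (hD : D ∈ 𝓑.blocks) (hDC : D ≠ C) {x y : X} (hxC : x ∈ C) (hxD : x ∈ D) (hyC : y ∉ C)
    (hxy : dist x y < 𝓑.eps) : y ∈ D ∧ ∀ B' ∈ 𝓑.blocks, B' ≠ D → y ∉ B' := by
  have hE : ∀ E ∈ 𝓑.blocks, y ∈ E → E = D := fun E hE hyE =>
    𝓑.eq_of_mem_thickening hC hE hD (by rintro rfl; exact hyC hyE) hDC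
      (self_subset_thickening 𝓑.eps_pos _ hxC) (mem_thickening_iff.2 ⟨y, hyE, hxy⟩)
      (self_subset_thickening 𝓑.eps_pos _ hxD)
  obtain ⟨E, hE', hyE⟩ := 𝓑.exists_mem_block y
  exact ⟨hE E hE' hyE ▸ hyE, fun B' hB' hne hyB' => hne (hE B' hB' hyB')⟩

theorem eventually_entersAt {ξ : VisualBoundary X z0} {t : ℝ} (h : entersAt 𝓑 ξ.1 B t) :
    ∀ᶠ η in 𝓝 ξ, entersAt 𝓑 η.1 B t := by
  obtain ⟨ρ, hρ, hball⟩ := Metric.eventually_nhds_iff.1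
    (𝓑.eventually_mem_and_forall_notMem h.mem_blocks h.mem h.notMem)
  filter_upwards [ξ.eventually_dist_lt h.nonneg hρ] with η hη
  exact ⟨h.nonneg, h.mem_blocks, hball (by rwa [dist_comm])⟩

/-- The ray runs along the wall `C ∩ D` and enters `D` just before and just after it. -/
theorem IsGeodesicRay.exists_entersAt_around_of_notMem_enteredBlocks
    (hz0 : ∀ W, IsWall 𝓑 W → z0 ∉ W) {γ : ℝ → X} (hγ : IsGeodesicRay z0 γ)
    (hinf : (enteredBlocks 𝓑 γ).Infinite) (hC : C ∈ 𝓑.blocks) (hCγ : C ∉ enteredBlocks 𝓑 γ)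
    {σ₀ : ℝ} (hσ₀ : 0 ≤ σ₀) (hσ₀C : γ σ₀ ∈ C) :
    ∃ D sm sp, entersAt 𝓑 γ D sm ∧ entersAt 𝓑 γ D sp ∧ D ≠ C ∧
      ∀ σ ≥ 0, γ σ ∈ C → σ ∈ Ioo sm sp := by
  set I := Ici 0 ∩ γ ⁻¹' C
  have hnot : ∀ s, ¬entersAt 𝓑 γ C s := fun s h => hCγ ⟨s, h⟩
  have hIk := hγ.isCompact_preimage_of_infinite hinf hC
  obtain ⟨α, hαI, hαle⟩ := hIk.exists_isLeast ⟨σ₀, hσ₀, hσ₀C⟩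
  obtain ⟨β, hβI, hβge⟩ := hIk.exists_isGreatest ⟨σ₀, hσ₀, hσ₀C⟩
  have hαβ : α ≤ β := hβge hαI
  have hCαβ : ∀ s ∈ Icc α β, γ s ∈ C := fun s hs =>
    ((hγ.ordConnected_preimage (𝓑.convex C hC)).out hαI hβI hs).2
  obtain ⟨D, hD, hDC, hβD⟩ := exists_mem_ne_of_not_entersAt hβI.1 hC hβI.2 (hnot β)
  have hwall := hγ.forall_mem_of_not_entersAt hC hD hDC hαI.1 hαβ hCαβ hnot hβD
  have hα : 0 < α := by
    refine hαI.1.lt_of_ne fun h0 => hz0 (C ∩ D) ⟨C, hC, D, hD, hDC.symm, rfl,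
      ⟨γ α, hαI.2, hwall α ⟨le_rfl, hαβ⟩⟩⟩ ?_
    rw [← hγ.1, h0]
    exact ⟨hαI.2, hwall α ⟨le_rfl, hαβ⟩⟩
  obtain ⟨h, hh, hhεα⟩ := exists_between (lt_min 𝓑.eps_pos hα)
  obtain ⟨hhε, hhα⟩ := lt_min_iff.1 hhεα
  have enters : ∀ s ≥ 0, s ∉ I → ∀ r ∈ Icc α β, |r - s| < 𝓑.eps → entersAt 𝓑 γ D s :=
    fun s hs hsI r hr hrs => ⟨hs, hD, 𝓑.mem_and_forall_notMem_of_near_wall hC hD hDC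
      (hCαβ r hr) (hwall r hr) (fun hsC => hsI ⟨hs, hsC⟩)
      (by rwa [hγ.dist_eq (hαI.1.trans hr.1) hs])⟩
  refine ⟨D, α - h, β + h, enters _ (by linarith) (fun h' => by linarith [hαle h']) α
    ⟨le_rfl, hαβ⟩ ?_, enters _ (by linarith [hαI.1]) (fun h' => by linarith [hβge h']) β
    ⟨hαβ, le_rfl⟩ ?_, hDC, fun σ hσ hσC => ⟨?_, ?_⟩⟩
  · rw [abs_lt]; constructor <;> linarith
  · rw [abs_lt]; constructor <;> linarith
  · linarith [hαle ⟨hσ, hσC⟩]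
  · linarith [hβge ⟨hσ, hσC⟩]

theorem eventually_forall_not_entersAt (hz0 : ∀ W, IsWall 𝓑 W → z0 ∉ W)
    {ξ : VisualBoundary X z0} (hinf : (enteredBlocks 𝓑 ξ.1).Infinite) (hC : C ∈ 𝓑.blocks)
    (hCξ : C ∉ enteredBlocks 𝓑 ξ.1) (τ : ℝ) :
    ∀ᶠ η in 𝓝 ξ, ∀ σ ∈ Icc 0 τ, ¬entersAt 𝓑 η.1 C σ := by
  by_cases htouch : ∀ σ ≥ 0, ξ.1 σ ∉ C
  · filter_upwards [ξ.eventually_forall_notMem (𝓑.closed C hC) isCompact_Icc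
      Icc_subset_Ici_self fun σ hσ => htouch σ hσ.1] with η hη σ hσ hσC
    exact hη σ hσ hσC.mem
  obtain ⟨σ₀, hσ₀, hσ₀C⟩ : ∃ σ₀ ≥ 0, ξ.1 σ₀ ∈ C := by simpa using htouch
  obtain ⟨D, sm, sp, hsm, hsp, hDC, hI⟩ :=
    ξ.2.exists_entersAt_around_of_notMem_enteredBlocks hz0 hinf hC hCξ hσ₀ hσ₀C
  filter_upwards [eventually_entersAt hsm, eventually_entersAt hsp,
    ξ.eventually_forall_notMem (𝓑.closed C hC) (isCompact_Icc.diff isOpen_Ioo)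
      (fun σ hσ => hσ.1.1) fun σ hσ hσC => hσ.2 (hI σ hσ.1.1 hσC)]
    with η hsm' hsp' hfar σ hσ hσC
  by_cases hσ' : σ ∈ Ioo sm sp
  · -- between its entries into `D` at `sm` and `sp`, the ray `η` stays in `D`
    exact hDC (hσC.eq_of_mem_Icc η.2 hsm'.mem_blocks hsm'.nonneg hsm'.mem hsp'.mem
      (Ioo_subset_Icc_self hσ')).symm
  · exact hfar σ ⟨hσ, hσ'⟩ hσC.mem

theorem eventually_isItineraryPrefix (hz0 : ∀ W, IsWall 𝓑 W → z0 ∉ W)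
    {ξ : VisualBoundary X z0} (hinf : (enteredBlocks 𝓑 ξ.1).Infinite) {S : Set (Set X)}
    (hS : IsItineraryPrefix 𝓑 ξ.1 S) : ∀ᶠ η in 𝓝 ξ, IsItineraryPrefix 𝓑 η.1 S := by
  rcases S.eq_empty_or_nonempty with rfl | hne
  · exact Eventually.of_forall fun _ => isItineraryPrefix_empty
  obtain ⟨F, hF, τ, hFτ, hlast⟩ := hS.exists_last hne
  choose! e heτ he using hlast
  set 𝔏 := {C ∈ 𝓑.blocks | (C ∩ thickening (𝓑.eps / 2) (ξ.1 '' Icc 0 τ)).Nonempty}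
  have h𝔏 : (𝔏 \ S).Finite := (𝓑.finite_setOf_inter_thickening_nonempty
    (isCompact_Icc.image_of_continuousOn (ξ.2.continuousOn.mono Icc_subset_Ici_self))).sdiff
  have hfar : ∀ C ∈ 𝔏 \ S, ∀ᶠ η in 𝓝 ξ, ∀ σ ∈ Icc 0 τ, ¬entersAt 𝓑 η.1 C σ := by
    rintro C ⟨⟨hC, -⟩, hCS⟩
    by_cases hCξ : C ∈ enteredBlocks 𝓑 ξ.1
    · filter_upwards [ξ.eventually_forall_notMem (𝓑.closed C hC) isCompact_Icc
        Icc_subset_Ici_self (hS.forall_notMem ξ.2 hF hFτ hCξ hCS)] with η hη σ hσ hσC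
      exact hη σ hσ hσC.mem
    · exact eventually_forall_not_entersAt hz0 hinf hC hCξ τ
  filter_upwards [hS.finite.eventually_all.2 fun B hB => eventually_entersAt (he B hB),
    h𝔏.eventually_all.2 hfar, ξ.eventually_forall_dist_lt τ (half_pos 𝓑.eps_pos)]
    with η hentries hfar hclose
  refine ⟨hS.finite, fun B hB => ⟨e B, hentries B hB⟩,
    fun B hB C s t hBs hCt hts => by_contra fun hCS => ?_⟩
  -- `η` enters `C` before `B`, hence before `τ`, so `C` is one of the blocks near `ξ '' [0, τ]`
  have ht : t ∈ Icc 0 τ := ⟨hCt.nonneg, (hCt.lt_of_le η.2 (fun h => hCS (h ▸ hB)) hBs hts hCt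
    (hentries B hB)).le.trans (heτ B hB)⟩
  refine hfar C ⟨⟨hCt.mem_blocks, η.1 t, hCt.mem,
    mem_thickening_iff.2 ⟨ξ.1 t, mem_image_of_mem _ ht, ?_⟩⟩, hCS⟩ t ht hCt
  rw [dist_comm]
  exact hclose t ht

theorem eventually_isItineraryPrefix_iff (hz0 : ∀ W, IsWall 𝓑 W → z0 ∉ W)
    {ξ : VisualBoundary X z0} (hinf : (enteredBlocks 𝓑 ξ.1).Infinite) (S : Set (Set X)) :
    ∀ᶠ η in 𝓝 ξ, (IsItineraryPrefix 𝓑 η.1 S ↔ IsItineraryPrefix 𝓑 ξ.1 S) := by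
  by_cases hS : IsItineraryPrefix 𝓑 ξ.1 S
  · filter_upwards [eventually_isItineraryPrefix hz0 hinf hS] with η hη using iff_of_true hη hS
  · obtain ⟨T, hT, hcard⟩ := ξ.2.exists_isItineraryPrefix_ncard_eq hinf S.ncard
    filter_upwards [eventually_isItineraryPrefix hz0 hinf hT] with η hη
    refine iff_of_false (fun hηS => hS ?_) hS
    rwa [hηS.eq_of_ncard_eq hη hcard.symm]

theorem sameItinerary_of_continuousOn (hz0 : ∀ W, IsWall 𝓑 W → z0 ∉ W) {T : Type*}
    [TopologicalSpace T] {s : Set T} (hs : IsPreconnected s) {c : T → VisualBoundary X z0}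
    (hc : ContinuousOn c s) (hinf : ∀ t ∈ s, (enteredBlocks 𝓑 (c t).1).Infinite) {t t' : T}
    (ht : t ∈ s) (ht' : t' ∈ s) : SameItinerary 𝓑 (c t).1 (c t').1 := by
  refine sameItinerary_of_forall_isItineraryPrefix_iff (c t).2 (c t').2 fun S => ?_
  refine hs.induction₂'
    (fun u v => IsItineraryPrefix 𝓑 (c u).1 S ↔ IsItineraryPrefix 𝓑 (c v).1 S)
    (fun u hu => ?_) (fun _ _ _ _ _ _ => Iff.trans) ht ht'
  filter_upwards [(hc u hu).eventually (eventually_isItineraryPrefix_iff hz0 (hinf u hu) S)]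
    with v hv using ⟨hv.symm, hv⟩

end Stability

theorem path_constant_itinerary_or_finite_general
    (n : ℕ) (M : SalvettiModel CKGraph)
    (𝓑Z : BlockDecomposition (ZProd M.X n) Set.univ)
    (z0 : ZProd M.X n) (hz0 : ∀ W : Set (ZProd M.X n), IsWall 𝓑Z W → z0 ∉ W)
    (c : ℝ → VisualBoundary (ZProd M.X n) z0) (hc : ContinuousOn c (Set.Icc 0 1)) :
    (∀ t ∈ Set.Icc (0 : ℝ) 1, SameItinerary 𝓑Z ((c t).1) ((c 0).1)) ∨
    ∃ t ∈ Set.Icc (0 : ℝ) 1, (enteredBlocks 𝓑Z ((c t).1)).Finite :=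
  or_iff_not_imp_right.2 fun hfin _ ht =>
    sameItinerary_of_continuousOn hz0 isPreconnected_Icc hc
      (fun u hu hu' => hfin ⟨u, hu, hu'⟩) ht (left_mem_Icc.2 zero_le_one)

/-- Let `Z = X_α × ℝ^{n+1}` with the product block decomposition and
let `c : [0,1] → ∂Z` be a path such that `c 0` has infinite itinerary.  Then either
every `c t` has the same itinerary as `c 0`, or some `c t` has finite itinerary. -/
theorem path_constant_itinerary_or_finite
    (n : ℕ) (M : SalvettiModel CKGraph)
    (𝓑X : BlockDecomposition M.X Set.univ) (h𝓑X : IsCKBlockDecomposition M 𝓑X)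
    (𝓑Z : BlockDecomposition (ZProd M.X n) Set.univ)
    (hcyl : IsCylinderDecomposition 𝓑X 𝓑Z)
    (z0 : ZProd M.X n) (hz0 : ∀ W : Set (ZProd M.X n), IsWall 𝓑Z W → z0 ∉ W)
    (c : ℝ → VisualBoundary (ZProd M.X n) z0) (hc : ContinuousOn c (Set.Icc 0 1))
    (h0 : HasInfiniteItinerary 𝓑Z (c 0).1) :
    (∀ t ∈ Set.Icc (0 : ℝ) 1, SameItinerary 𝓑Z ((c t).1) ((c 0).1)) ∨
    ∃ t ∈ Set.Icc (0 : ℝ) 1, (enteredBlocks 𝓑Z ((c t).1)).Finite :=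
  path_constant_itinerary_or_finite_general n M 𝓑Z z0 hz0 c hc
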